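/- Let G be a finite group and A = ⊕_{g∈G} A_g a G-graded algebra which is noetherian and densely graded (A_e/(A_{g⁻¹}A_g) finite dimensional for all g). If M is a G-graded right A-module such that for every homogeneous m ∈ M the identity component (mA)_e of the cyclic submodule mA is finite dimensional, then mA is finite dimensional for every homogeneous m ∈ M. -/
import Mathlib

set_option linter.unusedSectionVars false

open MulOpposite Submodule

section Aux

variable {k A G : Type} [Field k] [Ring A] [Algebra k A] [Group G] [DecidableEq G]
variable (𝒜 : G → Submodule k A)

noncomputable def gProj (hint : DirectSum.IsInternal 𝒜) (h : G) : A →ₗ[k] A :=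
  (𝒜 h).subtype ∘ₗ (DFinsupp.lapply h) ∘ₗ
    (LinearEquiv.ofBijective (DirectSum.coeLinearMap 𝒜) hint).symm.toLinearMap

lemma gProj_of_mem_same (hint : DirectSum.IsInternal 𝒜) {h : G} {a : A} (ha : a ∈ 𝒜 h) :
    gProj 𝒜 hint h a = a := by
  have : gProj 𝒜 hint h a
      = ↑(((LinearEquiv.ofBijective (DirectSum.coeLinearMap 𝒜) hint).symm a) h) := rfl
  rw [this, hint.ofBijective_coeLinearMap_of_mem ha]

lemma gProj_of_mem_ne (hint : DirectSum.IsInternal 𝒜) {h h' : G} (hne : h' ≠ h) {a : A}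
    (ha : a ∈ 𝒜 h') : gProj 𝒜 hint h a = 0 := by
  have : gProj 𝒜 hint h a
      = ↑(((LinearEquiv.ofBijective (DirectSum.coeLinearMap 𝒜) hint).symm a) h) := rfl
  rw [this, hint.ofBijective_coeLinearMap_of_mem_ne hne ha]
  rfl

/-- each graded component is "finitely generated" over the identity component -/
lemma comp_fg [IsNoetherianRing A] (hone : (1 : A) ∈ 𝒜 (1 : G))
    (hmul : ∀ (g h : G) (a b : A), a ∈ 𝒜 g → b ∈ 𝒜 h → a * b ∈ 𝒜 (g * h))
    (hint : DirectSum.IsInternal 𝒜) (h : G) :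
    ∃ S : Finset A, ↑S ⊆ (𝒜 h : Set A) ∧
      𝒜 h ≤ 𝒜 (1 : G) * Submodule.span k (S : Set A) := by
  -- the left ideal generated by the component is finitely generated
  obtain ⟨U, hU⟩ := IsNoetherian.noetherian (Submodule.span A ((𝒜 h : Set A)))
  have hex : ∀ (U : Finset A), (∀ u ∈ U, u ∈ Submodule.span A ((𝒜 h : Set A))) →
      ∃ S : Finset A, ↑S ⊆ (𝒜 h : Set A) ∧ ∀ u ∈ U, u ∈ Submodule.span A (S : Set A) := by
    classical
    intro U
    induction U using Finset.induction_on with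
    | empty => exact fun _ => ⟨∅, by simp, by simp⟩
    | @insert a U' ha IH =>
      intro hall
      obtain ⟨S, hS1, hS2⟩ := IH (fun u hu => hall u (Finset.mem_insert_of_mem hu))
      obtain ⟨t, ht1, ht2⟩ := Submodule.mem_span_finite_of_mem_span
        (hall a (Finset.mem_insert_self a U'))
      refine ⟨S ∪ t, ?_, ?_⟩
      · rw [Finset.coe_union]; exact Set.union_subset hS1 ht1
      · intro u hu
        rcases Finset.mem_insert.mp hu with rfl | hu
        · exact Submodule.span_mono (by rw [Finset.coe_union]; exact Set.subset_union_right) ht2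
        · exact Submodule.span_mono (by rw [Finset.coe_union]; exact Set.subset_union_left)
            (hS2 u hu)
  obtain ⟨S, hS, hSgen⟩ := hex U (fun u hu => by rw [← hU]; exact Submodule.subset_span hu)
  refine ⟨S, hS, ?_⟩
  -- every element of 𝒜 h lies in the left ideal generated by S
  have hspan : ∀ x ∈ 𝒜 h, x ∈ Submodule.span A (S : Set A) := by
    intro x hx
    have : x ∈ Submodule.span A ((𝒜 h : Set A)) := Submodule.subset_span hx
    rw [← hU] at this
    exact (Submodule.span_le.mpr (fun u hu => hSgen u hu)) this
  -- the k-submodule ⨆ s, 𝒜 s * span k S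
  set T : Submodule k A := ⨆ s : G, 𝒜 s * Submodule.span k (S : Set A) with hT
  have hsub : Submodule.span k (S : Set A) ≤ 𝒜 h := Submodule.span_le.mpr hS
  -- T is stable under left multiplication by homogeneous elements
  have hstabh : ∀ (s : G) (a : A), a ∈ 𝒜 s → ∀ x ∈ T, a * x ∈ T := by
    intro s a ha x hx
    have : Submodule.map (LinearMap.mulLeft k a) T ≤ T := by
      rw [hT, Submodule.map_iSup]
      refine iSup_le fun s' => ?_
      have h1 : Submodule.map (LinearMap.mulLeft k a) (𝒜 s' * Submodule.span k (S : Set A))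
          ≤ 𝒜 (s * s') * Submodule.span k (S : Set A) := by
        rintro _ ⟨y, hy, rfl⟩
        refine Submodule.mul_induction_on hy (fun c hc w hw => ?_) (fun y z hy hz => ?_)
        · show a * (c * w) ∈ _
          rw [← mul_assoc]
          exact Submodule.mul_mem_mul (hmul s s' a c ha hc) hw
        · show a * (y + z) ∈ _
          rw [mul_add]; exact add_mem hy hz
      exact le_trans h1 (le_iSup (fun s' => 𝒜 s' * Submodule.span k (S : Set A)) (s * s'))
    exact this ⟨x, hx, rfl⟩
  have hstab : ∀ (a : A) (x : A), x ∈ T → a * x ∈ T := by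
    intro a x hx
    have hamem : a ∈ (⊤ : Submodule k A) := Submodule.mem_top
    rw [← hint.submodule_iSup_eq_top] at hamem
    have : Submodule.map (LinearMap.mulRight k x) (⨆ s, 𝒜 s) ≤ T := by
      rw [Submodule.map_iSup]
      refine iSup_le fun s => ?_
      rintro _ ⟨y, hy, rfl⟩
      exact hstabh s y hy x hx
    exact this ⟨a, hamem, rfl⟩
  -- span A S ≤ T
  have hAspan : ∀ x ∈ Submodule.span A (S : Set A), x ∈ T := by
    intro x hx
    induction hx using Submodule.span_induction with
    | mem w hw =>
      have : (1 : A) * w ∈ 𝒜 (1 : G) * Submodule.span k (S : Set A) :=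
        Submodule.mul_mem_mul hone (Submodule.subset_span hw)
      rw [one_mul] at this
      exact le_iSup (fun s => 𝒜 s * Submodule.span k (S : Set A)) (1 : G) this
    | zero => exact zero_mem T
    | add y z _ _ hy hz => exact add_mem hy hz
    | smul a y _ hy => exact hstab a y hy
  -- project back to degree h
  intro x hx
  have hxT : x ∈ T := hAspan x (hspan x hx)
  have hxp : gProj 𝒜 hint h x = x := gProj_of_mem_same 𝒜 hint hx
  have hproj : Submodule.map (gProj 𝒜 hint h) T
      ≤ 𝒜 (1 : G) * Submodule.span k (S : Set A) := by
    rw [hT, Submodule.map_iSup]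
    refine iSup_le fun s => ?_
    rintro _ ⟨y, hy, rfl⟩
    refine Submodule.mul_induction_on hy (fun c hc w hw => ?_) (fun y z hy hz => ?_)
    · by_cases hs : s = 1
      · subst hs
        have hcw : c * w ∈ 𝒜 (1 : G) * Submodule.span k (S : Set A) :=
          Submodule.mul_mem_mul hc hw
        have hmem : c * w ∈ 𝒜 h := by
          have := hmul 1 h c w hc (hsub hw)
          rwa [one_mul] at this
        rw [gProj_of_mem_same 𝒜 hint hmem]
        exact hcw
      · have hmem : c * w ∈ 𝒜 (s * h) := hmul s h c w hc (hsub hw)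
        rw [gProj_of_mem_ne 𝒜 hint (by
          intro hc'; exact hs (by
            have := mul_right_cancel (hc'.trans (one_mul h).symm); simpa using this)) hmem]
        exact zero_mem _
    · rw [map_add]; exact add_mem hy hz
  rw [← hxp]
  exact hproj ⟨x, hxT, rfl⟩

section Mod

variable {M : Type} [AddCommGroup M] [Module Aᵐᵒᵖ M] [Module k M] [IsScalarTower k Aᵐᵒᵖ M]

/-- right action on `m` as a `k`-linear map -/
def actL (m : M) : A →ₗ[k] M where
  toFun a := op a • m
  map_add' a b := by show op (a + b) • m = op a • m + op b • m; rw [op_add, add_smul]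
  map_smul' c a := by
    show op (c • a) • m = c • (op a • m)
    rw [op_smul, smul_assoc]

lemma key_mul (m : M) (P Q : Submodule k A) (T : Finset M)
    (hPT : Submodule.map (actL (k := k) (A := A) m) P ≤ Submodule.span k (T : Set M)) :
    Submodule.map (actL (k := k) (A := A) m) (P * Q)
      ≤ ⨆ f ∈ T, Submodule.map (actL (k := k) (A := A) (f : M)) Q := by
  rintro _ ⟨x, hx, rfl⟩
  refine Submodule.mul_induction_on hx (fun a ha b hb => ?_) (fun y z hy hz => ?_)
  · have h1 : actL (k := k) (A := A) m (a * b) = op b • actL (k := k) (A := A) m a := by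
      show op (a * b) • m = op b • (op a • m)
      rw [op_mul, mul_smul]
    rw [h1]
    have h2 : actL (k := k) (A := A) m a ∈ Submodule.span k (T : Set M) :=
      hPT ⟨a, ha, rfl⟩
    have h3 : ∀ y ∈ Submodule.span k (T : Set M),
        op b • y ∈ ⨆ f ∈ T, Submodule.map (actL (k := k) (A := A) (f : M)) Q := by
      intro y hy
      induction hy using Submodule.span_induction with
      | mem f hf =>
        refine Submodule.mem_iSup_of_mem f (Submodule.mem_iSup_of_mem hf ?_)
        exact ⟨b, hb, rfl⟩
      | zero => rw [smul_zero]; exact zero_mem _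
      | add y z _ _ hy hz => rw [smul_add]; exact add_mem hy hz
      | smul c y _ hy => rw [smul_comm]; exact Submodule.smul_mem _ c hy
    exact h3 _ h2
  · rw [map_add]; exact add_mem hy hz

lemma findim_map_span_finset (x : M) (S : Finset A) :
    FiniteDimensional k (Submodule.map (actL (k := k) (A := A) x)
      (Submodule.span k (S : Set A))) := by
  rw [Submodule.map_span]
  exact FiniteDimensional.span_of_finite k (S.finite_toSet.image _)

/-- from a finite-dimensional submodule extract a finite spanning set inside it -/
lemma exists_spanning_finset (N : Submodule k M) [FiniteDimensional k N] :
    ∃ T : Finset M, ↑T ⊆ (N : Set M) ∧ Submodule.span k (T : Set M) = N := by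
  have hfg : N.FG := (Submodule.fg_top N).mp (Module.finite_def.mp inferInstance)
  obtain ⟨T, hT⟩ := hfg
  exact ⟨T, by rw [← hT]; exact Submodule.subset_span, hT⟩

lemma step_any [IsNoetherianRing A] (hone : (1 : A) ∈ 𝒜 (1 : G))
    (hmul : ∀ (g h : G) (a b : A), a ∈ 𝒜 g → b ∈ 𝒜 h → a * b ∈ 𝒜 (g * h))
    (hint : DirectSum.IsInternal 𝒜) (x : M)
    (hx : FiniteDimensional k (Submodule.map (actL (k := k) (A := A) x) (𝒜 (1 : G))))
    (h : G) :
    FiniteDimensional k (Submodule.map (actL (k := k) (A := A) x) (𝒜 h)) := by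
  obtain ⟨S, hS, hSle⟩ := comp_fg 𝒜 hone hmul hint h
  obtain ⟨T, hT1, hT2⟩ := exists_spanning_finset
    (Submodule.map (actL (k := k) (A := A) x) (𝒜 (1 : G)))
  have hle : Submodule.map (actL (k := k) (A := A) x) (𝒜 h)
      ≤ ⨆ f ∈ T, Submodule.map (actL (k := k) (A := A) (f : M))
          (Submodule.span k (S : Set A)) := by
    refine le_trans (Submodule.map_mono hSle) ?_
    exact key_mul x _ _ T (by rw [hT2])
  have : FiniteDimensional k (↥(⨆ f ∈ T, Submodule.map (actL (k := k) (A := A) (f : M))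
      (Submodule.span k (S : Set A)))) := by
    rw [iSup_subtype']
    have : ∀ f : {y // y ∈ T}, FiniteDimensional k
        (Submodule.map (actL (k := k) (A := A) (f : M)) (Submodule.span k (S : Set A))) :=
      fun f => findim_map_span_finset _ _
    exact Submodule.finiteDimensional_iSup _
  exact Submodule.finiteDimensional_of_le hle

lemma dense_span (hmul : ∀ (g h : G) (a b : A), a ∈ 𝒜 g → b ∈ 𝒜 h → a * b ∈ 𝒜 (g * h))
    (g : G)
    (hd : FiniteDimensional k
      (↥(𝒜 (1 : G)) ⧸ Submodule.comap (𝒜 (1 : G)).subtype (𝒜 g⁻¹ * 𝒜 g))) :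
    ∃ V : Set A, V.Finite ∧ 𝒜 (1 : G) ≤ (𝒜 g⁻¹ * 𝒜 g) ⊔ Submodule.span k V := by
  classical
  set K := Submodule.comap (𝒜 (1 : G)).subtype (𝒜 g⁻¹ * 𝒜 g) with hK
  have hfg : (⊤ : Submodule k (↥(𝒜 (1 : G)) ⧸ K)).FG := Module.finite_def.mp hd
  obtain ⟨Z, hZ⟩ := hfg
  have hsurj := Submodule.mkQ_surjective K
  set L : Finset ↥(𝒜 (1 : G)) := Z.image (fun z => (hsurj z).choose) with hL
  have hZL : (Z : Set (↥(𝒜 (1 : G)) ⧸ K)) ⊆ K.mkQ '' (L : Set ↥(𝒜 (1 : G))) := by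
    intro z hz
    exact ⟨(hsurj z).choose, Finset.mem_coe.mpr (Finset.mem_image_of_mem _ hz),
      (hsurj z).choose_spec⟩
  set V : Set A := Subtype.val '' (L : Set ↥(𝒜 (1 : G))) with hV
  refine ⟨V, L.finite_toSet.image _, ?_⟩
  intro x hx
  have hmk : K.mkQ ⟨x, hx⟩ ∈ Submodule.map K.mkQ (Submodule.span k (L : Set ↥(𝒜 (1 : G)))) := by
    rw [Submodule.map_span]
    exact Submodule.span_mono hZL (hZ ▸ Submodule.mem_top (R := k)
      (x := K.mkQ ⟨x, hx⟩) : K.mkQ ⟨x, hx⟩ ∈ Submodule.span k (Z : Set _))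
  obtain ⟨w, hw, hwe⟩ := hmk
  have hsub : (⟨x, hx⟩ - w : ↥(𝒜 (1 : G))) ∈ K := by
    rw [Submodule.mkQ_apply, Submodule.mkQ_apply] at hwe
    exact (Submodule.Quotient.eq K).mp hwe.symm
  have h1 : ((⟨x, hx⟩ - w : ↥(𝒜 (1 : G))) : A) ∈ 𝒜 g⁻¹ * 𝒜 g := hsub
  have h2 : (w : A) ∈ Submodule.span k V := by
    have hmem : (w : A) ∈ Submodule.map (𝒜 (1 : G)).subtype
        (Submodule.span k (L : Set ↥(𝒜 (1 : G)))) := ⟨w, hw, rfl⟩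
    rw [Submodule.map_span] at hmem
    refine Submodule.span_mono ?_ hmem
    rintro _ ⟨l, hl, rfl⟩
    exact ⟨l, hl, rfl⟩
  have h1' : x - (w : A) ∈ 𝒜 g⁻¹ * 𝒜 g := by
    have : ((⟨x, hx⟩ - w : ↥(𝒜 (1 : G))) : A) = x - (w : A) := by
      rw [AddSubgroupClass.coe_sub]
    rwa [this] at h1
  have hxeq : x = (x - (w : A)) + (w : A) := (sub_add_cancel x ((w : A))).symm
  rw [hxeq]
  exact Submodule.add_mem_sup h1' h2

lemma step_e [IsNoetherianRing A] (hone : (1 : A) ∈ 𝒜 (1 : G))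
    (hmul : ∀ (g h : G) (a b : A), a ∈ 𝒜 g → b ∈ 𝒜 h → a * b ∈ 𝒜 (g * h))
    (hint : DirectSum.IsInternal 𝒜)
    (ℳ : G → Submodule k M)
    (hMgr : ∀ (g h : G) (m : M) (a : A), m ∈ ℳ g → a ∈ 𝒜 h → op a • m ∈ ℳ (g * h))
    (htor : ∀ (g : G), ∀ m ∈ ℳ g, FiniteDimensional k
      ((Submodule.span k {x | ∃ a : A, x = op a • m}) ⊓ ℳ (1 : G) : Submodule k M))
    (g : G)
    (hd : FiniteDimensional k
      (↥(𝒜 (1 : G)) ⧸ Submodule.comap (𝒜 (1 : G)).subtype (𝒜 g⁻¹ * 𝒜 g)))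
    (m : M) (hm : m ∈ ℳ g) :
    FiniteDimensional k (Submodule.map (actL (k := k) (A := A) m) (𝒜 (1 : G))) := by
  classical
  obtain ⟨V, hVfin, hV⟩ := dense_span 𝒜 hmul g hd
  set F : Submodule k M :=
    (Submodule.span k {x | ∃ a : A, x = op a • m}) ⊓ ℳ (1 : G) with hF
  haveI : FiniteDimensional k F := htor g m hm
  obtain ⟨T, hT1, hT2⟩ := exists_spanning_finset F
  have hPT : Submodule.map (actL (k := k) (A := A) m) (𝒜 g⁻¹)
      ≤ Submodule.span k (T : Set M) := by
    rw [hT2]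
    rintro _ ⟨a, ha, rfl⟩
    refine ⟨Submodule.subset_span ⟨a, rfl⟩, ?_⟩
    have := hMgr g g⁻¹ m a hm ha
    rwa [mul_inv_cancel] at this
  have hkey := key_mul m (𝒜 g⁻¹) (𝒜 g) T hPT
  have hle : Submodule.map (actL (k := k) (A := A) m) (𝒜 (1 : G))
      ≤ (⨆ f ∈ T, Submodule.map (actL (k := k) (A := A) (f : M)) (𝒜 g))
        ⊔ Submodule.map (actL (k := k) (A := A) m) (Submodule.span k V) := by
    refine le_trans (Submodule.map_mono hV) ?_
    rw [Submodule.map_sup]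
    exact sup_le_sup hkey le_rfl
  have hf : ∀ f ∈ T, FiniteDimensional k
      (Submodule.map (actL (k := k) (A := A) (f : M)) (𝒜 g)) := by
    intro f hfT
    have hfF : f ∈ F := hT1 hfT
    have hf1 : f ∈ ℳ (1 : G) := hfF.2
    have hbase : FiniteDimensional k
        (Submodule.map (actL (k := k) (A := A) (f : M)) (𝒜 (1 : G))) := by
      have hle2 : Submodule.map (actL (k := k) (A := A) (f : M)) (𝒜 (1 : G))
          ≤ (Submodule.span k {x | ∃ a : A, x = op a • f}) ⊓ ℳ (1 : G) := by
        rintro _ ⟨a, ha, rfl⟩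
        refine ⟨Submodule.subset_span ⟨a, rfl⟩, ?_⟩
        have := hMgr 1 1 f a hf1 ha
        rwa [one_mul] at this
      haveI := htor 1 f hf1
      exact Submodule.finiteDimensional_of_le hle2
    exact step_any 𝒜 hone hmul hint f hbase g
  haveI h1 : FiniteDimensional k
      (↥(⨆ f ∈ T, Submodule.map (actL (k := k) (A := A) (f : M)) (𝒜 g))) := by
    rw [iSup_subtype']
    haveI : ∀ f : {y // y ∈ T}, FiniteDimensional k
        (Submodule.map (actL (k := k) (A := A) (f : M)) (𝒜 g)) :=
      fun f => hf f f.2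
    exact Submodule.finiteDimensional_iSup _
  haveI h2 : FiniteDimensional k
      (Submodule.map (actL (k := k) (A := A) m) (Submodule.span k V)) := by
    rw [Submodule.map_span]
    exact FiniteDimensional.span_of_finite k (hVfin.image _)
  exact Submodule.finiteDimensional_of_le hle

end Mod

end Aux

/-- Let `G` be a finite group and `A` a noetherian densely `G`-graded algebra
(`A_e/(A_{g⁻¹}·A_g)` finite-dimensional for all `g`).  If `M` is a `G`-graded right
`A`-module such that for every homogeneous `m ∈ M` the identity component `(mA)_e` of the
cyclic submodule `mA` is finite-dimensional, then `mA` is finite-dimensional for every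
homogeneous `m ∈ M`. -/
theorem graded_torsion_of_identity_component_torsion
    (k A G : Type) [Field k] [CharZero k] [Ring A] [Algebra k A]
    [Group G] [Finite G] [DecidableEq G]
    [IsNoetherianRing A] [IsNoetherianRing Aᵐᵒᵖ]
    (𝒜 : G → Submodule k A)
    (hone : (1 : A) ∈ 𝒜 (1 : G))
    (hmul : ∀ (g h : G) (a b : A), a ∈ 𝒜 g → b ∈ 𝒜 h → a * b ∈ 𝒜 (g * h))
    (hinternal : DirectSum.IsInternal 𝒜)
    (hdense : ∀ g : G, FiniteDimensional k
      (↥(𝒜 (1 : G)) ⧸ Submodule.comap (𝒜 (1 : G)).subtype (𝒜 g⁻¹ * 𝒜 g)))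
    (M : Type) [AddCommGroup M] [Module Aᵐᵒᵖ M] [Module k M] [IsScalarTower k Aᵐᵒᵖ M]
    (ℳ : G → Submodule k M)
    (hMinternal : DirectSum.IsInternal ℳ)
    (hMgr : ∀ (g h : G) (m : M) (a : A), m ∈ ℳ g → a ∈ 𝒜 h → op a • m ∈ ℳ (g * h))
    (htor : ∀ (g : G), ∀ m ∈ ℳ g, FiniteDimensional k
      ((Submodule.span k {x | ∃ a : A, x = op a • m}) ⊓ ℳ (1 : G) : Submodule k M)) :
    ∀ (g : G), ∀ m ∈ ℳ g, FiniteDimensional k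
      (Submodule.span k {x | ∃ a : A, x = op a • m}) := by
  intro g m hm
  have hset : {x | ∃ a : A, x = op a • m} = Set.range (actL (k := k) (A := A) m) := by
    ext x
    exact ⟨fun ⟨a, h⟩ => ⟨a, h.symm⟩, fun ⟨a, h⟩ => ⟨a, h.symm⟩⟩
  rw [hset, ← LinearMap.coe_range, Submodule.span_eq, LinearMap.range_eq_map,
    ← hinternal.submodule_iSup_eq_top, Submodule.map_iSup]
  haveI : ∀ h : G, FiniteDimensional k
      (Submodule.map (actL (k := k) (A := A) m) (𝒜 h)) := fun h =>
    step_any 𝒜 hone hmul hinternal m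
      (step_e 𝒜 hone hmul hinternal ℳ hMgr htor g (hdense g) m hm) h
  exact Submodule.finiteDimensional_iSup _
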